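/- For any sequence (z_i)_{i≥1} of positive integers, let π̃ : {1,2,...} → {1,2,...} be defined inductively by letting π̃(i) be the z_i-th smallest element of {1,2,...} \ {π̃(1),...,π̃(i-1)}, and let (m_n)_{n≥0} be defined by m_0 = 0 and m_n = max(m_{n-1}, z_n) - 1. Then for every n ≥ 1, m_n = max_{1 ≤ j ≤ n} π̃(j) - n. Consequently, when (z_i) = (Z_i) is an i.i.d. Geometric(1-q) sequence (0 < q < 1), the first return time R_0^+ = min{k > 0 : M_k = 0} of the chain M_n = max(M_{n-1}, Z_n) - 1 started at M_0 = 0 has the same distribution as the first regeneration time T_1 = min{j ≥ 1 : π̃ built from (Z_i) maps {1,...,j} onto itself}. -/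

import Mathlib

open MeasureTheory

noncomputable section

/-- The insertion process built from a sequence `z` of positive integers (indexed
from 1; the value at index 0 is junk): `insertProc z i` is the `z i`-th smallest
element of `{1,2,...} \ {insertProc z 1, ..., insertProc z (i-1)}`. -/
noncomputable def insertProc (z : ℕ → ℕ) (i : ℕ) : ℕ :=
  if i = 0 then 0
  else Nat.nth (fun m => 1 ≤ m ∧ ∀ j, j < i → insertProc z j ≠ m) (z i - 1)
termination_by i

/-- The chain `m_0 = m0`, `m_n = max (m_{n-1}, z_n) - 1`. -/
def chainM (m0 : ℕ) (z : ℕ → ℕ) : ℕ → ℕ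
  | 0 => m0
  | n + 1 => max (chainM m0 z n) (z (n + 1)) - 1

/-!
After `n` steps the values `π̃(1), …, π̃(n)` are distinct elements of `[1, S]`, `S` being their
maximum, so exactly `S - n` values below `S` are still free, and every value above `S` is free.
Hence `π̃(n+1)` stays below `S` when `z_{n+1} ≤ S - n` and equals `n + z_{n+1}` otherwise, i.e.
`S_{n+1} - (n+1) = max(S_n - n, z_{n+1}) - 1`, the recursion of the chain. In particular
`m_k = 0` iff `S_k = k` iff `π̃` maps `{1, …, k}` onto itself, so the return time and the
regeneration time agree pointwise, not only in law.
-/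

theorem Nat.nth_eq_of_forall_le {p : ℕ → Prop} [DecidablePred p] {a k : ℕ}
    (hp : ∀ m, a ≤ m → p m) (hk : Nat.count p a ≤ k) :
    Nat.nth p k = a + (k - Nat.count p a) := by
  set t := k - Nat.count p a
  have hcount : Nat.count p (a + t) = Nat.count p a + t := by
    rw [Nat.count_add, Nat.count_of_forall fun m _ => hp _ (Nat.le_add_right a m)]
  rw [show k = Nat.count p (a + t) by omega, Nat.nth_count (hp _ (Nat.le_add_right a t))]

/-- The values still available at step `i` of the insertion process; `insertProc z i` is the
`(z i - 1)`-th of them, counting from `0`. -/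
def insertAvail (z : ℕ → ℕ) (i : ℕ) : ℕ → Prop :=
  fun m => 1 ≤ m ∧ ∀ j, j < i → insertProc z j ≠ m

section InsertProc

variable (z : ℕ → ℕ)

theorem insertProc_zero : insertProc z 0 = 0 := by
  rw [insertProc, if_pos rfl]

theorem insertProc_of_ne_zero {i : ℕ} (hi : i ≠ 0) :
    insertProc z i = Nat.nth (insertAvail z i) (z i - 1) := by
  rw [insertProc, if_neg hi]
  rfl

theorem insertAvail_succ_iff (n m : ℕ) :
    insertAvail z (n + 1) m ↔ 1 ≤ m ∧ m ∉ (Finset.Icc 1 n).image (insertProc z) := by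
  simp only [insertAvail, Finset.mem_image, Finset.mem_Icc, not_exists, not_and]
  refine and_congr_right fun hm => ⟨fun h j hj => h j (by omega), fun h j hj => ?_⟩
  rcases Nat.eq_zero_or_pos j with rfl | hj0
  · rw [insertProc_zero]
    omega
  · exact h j ⟨hj0, by omega⟩

theorem insertAvail_infinite (i : ℕ) : (Set.ofPred (insertAvail z i)).Infinite := by
  refine (Set.Ioi_infinite ((Finset.range i).sup (insertProc z))).mono fun m hm => ?_
  refine ⟨by simp only [Set.mem_Ioi] at hm; omega, fun j hj hjm => ?_⟩
  exact (Finset.le_sup (f := insertProc z) (Finset.mem_range.mpr hj)).not_gt (hjm ▸ hm)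

theorem insertAvail_insertProc {i : ℕ} (hi : i ≠ 0) : insertAvail z i (insertProc z i) := by
  rw [insertProc_of_ne_zero z hi]
  exact Nat.nth_mem_of_infinite (insertAvail_infinite z i) _

theorem injOn_insertProc : Set.InjOn (insertProc z) {i | i ≠ 0} := by
  intro a ha b hb hab
  by_contra hne
  rcases Nat.lt_or_gt_of_ne hne with h | h
  · exact (insertAvail_insertProc z hb).2 a h hab
  · exact (insertAvail_insertProc z ha).2 b h hab.symm

theorem card_image_insertProc (n : ℕ) : ((Finset.Icc 1 n).image (insertProc z)).card = n := by
  rw [Finset.card_image_of_injOn, Nat.card_Icc, Nat.add_sub_cancel]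
  exact (injOn_insertProc z).mono fun i hi =>
    Nat.one_le_iff_ne_zero.mp (Finset.mem_Icc.mp (Finset.mem_coe.mp hi)).1

theorem image_insertProc_subset_Icc_sup (n : ℕ) :
    (Finset.Icc 1 n).image (insertProc z)
      ⊆ Finset.Icc 1 ((Finset.Icc 1 n).sup (insertProc z)) := by
  intro m hm
  obtain ⟨j, hj, rfl⟩ := Finset.mem_image.mp hm
  have hj0 : j ≠ 0 := Nat.one_le_iff_ne_zero.mp (Finset.mem_Icc.mp hj).1
  exact Finset.mem_Icc.mpr ⟨(insertAvail_insertProc z hj0).1, Finset.le_sup hj⟩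

theorem le_sup_insertProc (n : ℕ) : n ≤ (Finset.Icc 1 n).sup (insertProc z) := by
  simpa [card_image_insertProc] using Finset.card_le_card (image_insertProc_subset_Icc_sup z n)

open Classical in
theorem count_insertAvail_add (n : ℕ) :
    Nat.count (insertAvail z (n + 1)) ((Finset.Icc 1 n).sup (insertProc z) + 1) + n
      = (Finset.Icc 1 n).sup (insertProc z) := by
  set S := (Finset.Icc 1 n).sup (insertProc z)
  have hfilter : (Finset.range (S + 1)).filter (insertAvail z (n + 1))
      = Finset.Icc 1 S \ (Finset.Icc 1 n).image (insertProc z) := by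
    ext m
    simp only [Finset.mem_filter, Finset.mem_range, Finset.mem_sdiff, Finset.mem_Icc,
      insertAvail_succ_iff]
    exact ⟨fun ⟨hm, h1, h2⟩ => ⟨⟨h1, by omega⟩, h2⟩, fun ⟨⟨h1, h2⟩, h3⟩ => ⟨by omega, h1, h3⟩⟩
  rw [Nat.count_eq_card_filter_range, hfilter,
    Finset.card_sdiff_of_subset (image_insertProc_subset_Icc_sup z n), card_image_insertProc,
    Nat.card_Icc, Nat.add_sub_cancel]
  exact Nat.sub_add_cancel (le_sup_insertProc z n)

open Classical in
theorem sup_insertProc_succ (n : ℕ) :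
    (Finset.Icc 1 (n + 1)).sup (insertProc z)
      = max ((Finset.Icc 1 n).sup (insertProc z)) (n + 1 + (z (n + 1) - 1)) := by
  rw [← Finset.insert_Icc_right_eq_Icc_add_one (by omega), Finset.sup_insert,
    insertProc_of_ne_zero z (Nat.add_one_ne_zero n), max_comm]
  have hcount := count_insertAvail_add z n
  set S := (Finset.Icc 1 n).sup (insertProc z)
  have htail : ∀ m, S + 1 ≤ m → insertAvail z (n + 1) m := fun m hm =>
    (insertAvail_succ_iff z n m).mpr ⟨by omega, fun hmem =>
      (Finset.mem_Icc.mp (image_insertProc_subset_Icc_sup z n hmem)).2.not_gt (by omega)⟩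
  rcases lt_or_ge (z (n + 1) - 1) (Nat.count (insertAvail z (n + 1)) (S + 1)) with h | h
  · have := Nat.nth_lt_of_lt_count h
    omega
  · rw [Nat.nth_eq_of_forall_le htail h]
    omega

end InsertProc

theorem chainM_zero_eq_sup_insertProc_sub (z : ℕ → ℕ) (n : ℕ) :
    chainM 0 z n = (Finset.Icc 1 n).sup (insertProc z) - n := by
  induction n with
  | zero => rfl
  | succ n ih =>
    have := le_sup_insertProc z n
    rw [chainM, ih, sup_insertProc_succ]
    omega

theorem image_insertProc_Icc_eq_iff (z : ℕ → ℕ) (k : ℕ) :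
    (Finset.Icc 1 k).image (insertProc z) = Finset.Icc 1 k
      ↔ (Finset.Icc 1 k).sup (insertProc z) ≤ k := by
  constructor
  · intro h
    refine Finset.sup_le fun j hj => ?_
    have := h ▸ Finset.mem_image_of_mem (insertProc z) hj
    exact (Finset.mem_Icc.mp this).2
  · intro h
    refine Finset.eq_of_subset_of_card_le ?_ (by rw [card_image_insertProc, Nat.card_Icc]; omega)
    exact (image_insertProc_subset_Icc_sup z k).trans (Finset.Icc_subset_Icc_right h)

theorem chainM_zero_eq_zero_iff (z : ℕ → ℕ) (k : ℕ) :
    chainM 0 z k = 0 ↔ (Finset.Icc 1 k).image (insertProc z) = Finset.Icc 1 k := by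
  rw [chainM_zero_eq_sup_insertProc_sub, image_insertProc_Icc_eq_iff, Nat.sub_eq_zero_iff_le]

theorem chain_eq_max_and_return_time_dist_general
    {Ω : Type*} [MeasurableSpace Ω] (P : Measure Ω)
    (Z : ℕ → Ω → ℕ) :
    (∀ z : ℕ → ℕ, (∀ i, 1 ≤ z i) → ∀ n : ℕ, 1 ≤ n →
        chainM 0 z n = (Finset.Icc 1 n).sup (insertProc z) - n)
      ∧ Measure.map
          (fun ω => sInf {k | 0 < k ∧ chainM 0 (fun i => Z i ω) k = 0}) P
        = Measure.map
          (fun ω => sInf {j | 0 < j ∧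
            (Finset.Icc 1 j).image (insertProc (fun i => Z i ω)) = Finset.Icc 1 j}) P := by
  refine ⟨fun z _ n _ => chainM_zero_eq_sup_insertProc_sub z n, ?_⟩
  simp only [chainM_zero_eq_zero_iff]

/-- **The Markov chain records the insertion process, and the return time to 0 has the
law of the first regeneration time.** (i) For any sequence `(z_i)_{i≥1}` of positive
integers, the chain `m_n = max(m_{n-1}, z_n) - 1` started from `m_0 = 0` satisfies
`m_n = max_{1 ≤ j ≤ n} π̃(j) - n` for all `n ≥ 1`, where `π̃` is the insertion process
built from `z`. (ii) Consequently, when the `z` are i.i.d. Geometric(1-q) random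
variables, `R_0^+ = min{k > 0 : M_k = 0}` has the same distribution as
`T_1 = min{j ≥ 1 : π̃ maps {1,...,j} onto itself}`. -/
theorem chain_eq_max_and_return_time_dist
    {Ω : Type*} [MeasurableSpace Ω] (P : Measure Ω) [IsProbabilityMeasure P]
    (q : ℝ) (hq0 : 0 < q) (hq1 : q < 1)
    (Z : ℕ → Ω → ℕ)
    (hmeas : ∀ i, Measurable (Z i))
    (hindep : ProbabilityTheory.iIndepFun Z P)
    (hposZ : ∀ i ω, 1 ≤ Z i ω)
    (hgeom : ∀ i k, 1 ≤ k →
      P {ω | Z i ω = k} = ENNReal.ofReal ((1 - q) * q ^ (k - 1))) :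
    (∀ z : ℕ → ℕ, (∀ i, 1 ≤ z i) → ∀ n : ℕ, 1 ≤ n →
        chainM 0 z n = (Finset.Icc 1 n).sup (insertProc z) - n)
      ∧ Measure.map
          (fun ω => sInf {k | 0 < k ∧ chainM 0 (fun i => Z i ω) k = 0}) P
        = Measure.map
          (fun ω => sInf {j | 0 < j ∧
            (Finset.Icc 1 j).image (insertProc (fun i => Z i ω)) = Finset.Icc 1 j}) P :=
  chain_eq_max_and_return_time_dist_general P Z

end
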